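/- For any binary-input DMC W, the symmetric capacities of the polarized channels satisfy I(W^-) + I(W^+) = 2 I(W), i.e., the polarization transform preserves total symmetric capacity. -/

import Mathlib

open Finset

/-- A discrete channel: nonnegative transition "probabilities" summing to one. -/
def IsChannel {X Y : Type} [Fintype Y] (W : X → Y → ℝ) : Prop :=
  (∀ x y, 0 ≤ W x y) ∧ ∀ x, ∑ y, W x y = 1

/-- `Wd` is (stochastically) degraded with respect to `W`. -/
def Degraded {X Y Z : Type} [Fintype Y] [Fintype Z]
    (Wd : X → Z → ℝ) (W : X → Y → ℝ) : Prop :=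
  ∃ P : Y → Z → ℝ, IsChannel P ∧ ∀ x z, Wd x z = ∑ y, P y z * W x y
/-- Arıkan's minus transform. -/
noncomputable def Wminus {Y : Type} (W : Fin 2 → Y → ℝ) : Fin 2 → Y × Y → ℝ :=
  fun u1 p => ∑ u2 : Fin 2, (1 / 2 : ℝ) * W (u1 + u2) p.1 * W u2 p.2

/-- Arıkan's plus transform. -/
noncomputable def Wplus {Y : Type} (W : Fin 2 → Y → ℝ) : Fin 2 → Y × Y × Fin 2 → ℝ :=
  fun u2 p => (1 / 2 : ℝ) * W (p.2.2 + u2) p.1 * W u2 p.2.1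
/-- Bhattacharyya parameter. -/
noncomputable def Zparam {Y : Type} [Fintype Y] (W : Fin 2 → Y → ℝ) : ℝ :=
  ∑ y, Real.sqrt (W 0 y * W 1 y)

/-- Symmetric capacity (mutual information with uniform input), in bits. -/
noncomputable def Icap {Y : Type} [Fintype Y] (W : Fin 2 → Y → ℝ) : ℝ :=
  ∑ y, ∑ x : Fin 2, (1 / 2 : ℝ) * W x y *
    Real.logb 2 (W x y / ((1 / 2) * W 0 y + (1 / 2) * W 1 y))

/-! The chain rule of mutual information, pointwise: for every `(y₁, y₂, u₁, u₂)` the information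
densities of `W⁻` at `(u₁; y₁y₂)` and of `W⁺` at `(u₂; y₁y₂u₁)` add up to the density of the
product channel `W ⊗ W` at `(u₁ + u₂, u₂; y₁y₂)`, because the intermediate likelihood
`W⁻(y₁y₂ | u₁)` cancels. Averaging against the joint law, and reindexing
`(u₁, u₂) ↦ (u₁ + u₂, u₂)`, the sum `I(W⁻) + I(W⁺)` becomes `I(W ⊗ W) = 2 I(W)`. -/

theorem Fintype.sum_sum_add_right {G M : Type*} [AddGroup G] [Fintype G] [AddCommMonoid M]
    (f : G → G → M) : ∑ u₁, ∑ u₂, f (u₁ + u₂) u₂ = ∑ x₁, ∑ x₂, f x₁ x₂ := by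
  rw [Finset.sum_comm, Finset.sum_comm (f := f)]
  exact Finset.sum_congr rfl fun u₂ _ => Equiv.sum_comp (Equiv.addRight u₂) (f · u₂)

theorem Fintype.sum_sum_mul_mul_add {α β : Type*} [Fintype α] [Fintype β]
    {p : α → ℝ} {q : β → ℝ} (hp : ∑ a, p a = 1) (hq : ∑ b, q b = 1) (f : α → ℝ) (g : β → ℝ) :
    ∑ a, ∑ b, p a * q b * (f a + g b) = ∑ a, p a * f a + ∑ b, q b * g b := by
  have hsplit : ∀ a b, p a * q b * (f a + g b) = p a * f a * q b + p a * (q b * g b) := by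
    intros; ring
  simp only [hsplit, Finset.sum_add_distrib, ← Finset.sum_mul_sum, hp, hq, one_mul, mul_one]

namespace Polar

variable {Y : Type} (W : Fin 2 → Y → ℝ)

noncomputable def outputMean (y : Y) : ℝ := 1 / 2 * W 0 y + 1 / 2 * W 1 y

theorem outputMean_Wminus (y₁ y₂ : Y) :
    outputMean (Wminus W) (y₁, y₂) = outputMean W y₁ * outputMean W y₂ := by
  simp only [outputMean, Wminus, Fin.sum_univ_two, show (1 : Fin 2) + 1 = 0 from rfl, zero_add,
    add_zero]
  ring

theorem Wplus_apply (u₁ u₂ : Fin 2) (y₁ y₂ : Y) :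
    Wplus W u₂ (y₁, y₂, u₁) = 1 / 2 * (W (u₁ + u₂) y₁ * W u₂ y₂) :=
  mul_assoc _ _ _

theorem outputMean_Wplus (y₁ y₂ : Y) (u₁ : Fin 2) :
    outputMean (Wplus W) (y₁, y₂, u₁) = 1 / 2 * Wminus W u₁ (y₁, y₂) := by
  simp only [outputMean, Wplus, Wminus, Fin.sum_univ_two]
  ring

variable [Fintype Y]

theorem Icap_eq : Icap W = ∑ y, ∑ x, 1 / 2 * W x y * Real.logb 2 (W x y / outputMean W y) :=
  rfl

theorem Icap_eq_sum_prod :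
    Icap W = ∑ xy : Fin 2 × Y, 1 / 2 * W xy.1 xy.2 *
      Real.logb 2 (W xy.1 xy.2 / outputMean W xy.2) := by
  rw [Icap_eq, Fintype.sum_prod_type, Finset.sum_comm]

theorem sum_half_mul_eq_one (hW : IsChannel W) : ∑ xy : Fin 2 × Y, 1 / 2 * W xy.1 xy.2 = 1 := by
  simp [Fintype.sum_prod_type, ← Finset.mul_sum, hW.2]

theorem half_mul_le_outputMean (hW : IsChannel W) (x : Fin 2) (y : Y) :
    1 / 2 * W x y ≤ outputMean W y := by
  fin_cases x <;> simp only [outputMean, Fin.zero_eta, Fin.mk_one] <;> linarith [hW.1 0 y, hW.1 1 y]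

theorem half_mul_le_Wminus (hW : IsChannel W) (u₁ u₂ : Fin 2) (y₁ y₂ : Y) :
    1 / 2 * (W (u₁ + u₂) y₁ * W u₂ y₂) ≤ Wminus W u₁ (y₁, y₂) := by
  have hnonneg : ∀ v ∈ Finset.univ, 0 ≤ 1 / 2 * W (u₁ + v) y₁ * W v y₂ := fun v _ =>
    mul_nonneg (mul_nonneg (by norm_num) (hW.1 _ _)) (hW.1 _ _)
  calc 1 / 2 * (W (u₁ + u₂) y₁ * W u₂ y₂) = 1 / 2 * W (u₁ + u₂) y₁ * W u₂ y₂ := by ring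
    _ ≤ Wminus W u₁ (y₁, y₂) := Finset.single_le_sum hnonneg (Finset.mem_univ u₂)

theorem Icap_Wminus :
    Icap (Wminus W) = ∑ y₁, ∑ y₂, ∑ u₁, ∑ u₂, 1 / 4 * (W (u₁ + u₂) y₁ * W u₂ y₂) *
      Real.logb 2 (Wminus W u₁ (y₁, y₂) / (outputMean W y₁ * outputMean W y₂)) := by
  rw [Icap_eq, Fintype.sum_prod_type]
  refine Finset.sum_congr rfl fun y₁ _ => Finset.sum_congr rfl fun y₂ _ =>
    Finset.sum_congr rfl fun u₁ _ => ?_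
  rw [outputMean_Wminus, ← Finset.sum_mul, Wminus, Finset.mul_sum]
  congr 1
  refine Finset.sum_congr rfl fun u₂ _ => ?_
  ring

theorem Icap_Wplus :
    Icap (Wplus W) = ∑ y₁, ∑ y₂, ∑ u₁, ∑ u₂, 1 / 4 * (W (u₁ + u₂) y₁ * W u₂ y₂) *
      Real.logb 2 (W (u₁ + u₂) y₁ * W u₂ y₂ / Wminus W u₁ (y₁, y₂)) := by
  simp only [Icap_eq, Fintype.sum_prod_type, outputMean_Wplus]
  refine Finset.sum_congr rfl fun y₁ _ => Finset.sum_congr rfl fun y₂ _ =>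
    Finset.sum_congr rfl fun u₁ _ => Finset.sum_congr rfl fun u₂ _ => ?_
  rw [Wplus_apply, mul_div_mul_left _ _ (one_div_ne_zero two_ne_zero)]
  ring

theorem chain_rule_pointwise (hW : IsChannel W) (u₁ u₂ : Fin 2) (y₁ y₂ : Y) :
    1 / 4 * (W (u₁ + u₂) y₁ * W u₂ y₂) *
        Real.logb 2 (Wminus W u₁ (y₁, y₂) / (outputMean W y₁ * outputMean W y₂)) +
      1 / 4 * (W (u₁ + u₂) y₁ * W u₂ y₂) *
        Real.logb 2 (W (u₁ + u₂) y₁ * W u₂ y₂ / Wminus W u₁ (y₁, y₂)) =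
    1 / 4 * (W (u₁ + u₂) y₁ * W u₂ y₂) * Real.logb 2 (W (u₁ + u₂) y₁ / outputMean W y₁) +
      1 / 4 * (W (u₁ + u₂) y₁ * W u₂ y₂) * Real.logb 2 (W u₂ y₂ / outputMean W y₂) := by
  rcases eq_or_ne (W (u₁ + u₂) y₁ * W u₂ y₂) 0 with h | h
  · simp [h]
  have hx₁ : 0 < W (u₁ + u₂) y₁ := (hW.1 _ _).lt_of_ne (left_ne_zero_of_mul h).symm
  have hx₂ : 0 < W u₂ y₂ := (hW.1 _ _).lt_of_ne (right_ne_zero_of_mul h).symm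
  have hm₁ : 0 < outputMean W y₁ := by linarith [half_mul_le_outputMean W hW (u₁ + u₂) y₁]
  have hm₂ : 0 < outputMean W y₂ := by linarith [half_mul_le_outputMean W hW u₂ y₂]
  have hminus : 0 < Wminus W u₁ (y₁, y₂) := by
    linarith [half_mul_le_Wminus W hW u₁ u₂ y₁ y₂, mul_pos hx₁ hx₂]
  rw [← mul_add, ← mul_add, ← Real.logb_mul (by positivity) (by positivity),
    ← Real.logb_mul (by positivity) (by positivity)]
  congr 2
  field_simp

end Polar

open Polar in
/-- The polarization transform preserves total symmetric capacity:
`I(W⁻) + I(W⁺) = 2 I(W)`. -/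
theorem capacity_conservation {Y : Type} [Fintype Y]
    (W : Fin 2 → Y → ℝ) (hW : IsChannel W) :
    Icap (Wminus W) + Icap (Wplus W) = 2 * Icap W := by
  set p : Fin 2 × Y → ℝ := fun xy => 1 / 2 * W xy.1 xy.2
  set f : Fin 2 × Y → ℝ := fun xy => Real.logb 2 (W xy.1 xy.2 / outputMean W xy.2)
  calc Icap (Wminus W) + Icap (Wplus W)
      = ∑ y₁, ∑ y₂, ∑ u₁, ∑ u₂, 1 / 4 * (W (u₁ + u₂) y₁ * W u₂ y₂) *
          (f (u₁ + u₂, y₁) + f (u₂, y₂)) := by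
        simp only [Icap_Wminus, Icap_Wplus, ← Finset.sum_add_distrib, chain_rule_pointwise W hW,
          mul_add, f]
    _ = ∑ y₁, ∑ y₂, ∑ x₁, ∑ x₂, p (x₁, y₁) * p (x₂, y₂) * (f (x₁, y₁) + f (x₂, y₂)) := by
        refine Finset.sum_congr rfl fun y₁ _ => Finset.sum_congr rfl fun y₂ _ => ?_
        rw [← Fintype.sum_sum_add_right fun x₁ x₂ =>
          p (x₁, y₁) * p (x₂, y₂) * (f (x₁, y₁) + f (x₂, y₂))]
        refine Finset.sum_congr rfl fun u₁ _ => Finset.sum_congr rfl fun u₂ _ => ?_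
        simp only [p]
        ring
    _ = ∑ xy₁, ∑ xy₂, p xy₁ * p xy₂ * (f xy₁ + f xy₂) := by
        simp only [Fintype.sum_prod_type_right]
        exact Finset.sum_congr rfl fun _ _ => Finset.sum_comm
    _ = 2 * Icap W := by
        rw [Fintype.sum_sum_mul_mul_add (sum_half_mul_eq_one W hW) (sum_half_mul_eq_one W hW),
          Icap_eq_sum_prod]
        ring
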